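/- arXiv:2312.08321 — 3 statements merged into one kernel-verified Lean document; each statement's English description precedes it below -/
import Mathlib

section
/- Let X be a separable Fréchet space, i.e., a separable, complete, metrizable topological vector space over ℂ whose topology is induced by a countable family (N_j)_{j≥1} of seminorms. Let (M_j)_{j≥1} be a sequence of positive real numbers and (k_j)_{j≥1} a sequence of positive integers. Then the set L_{(M_j),(k_j)}(X) = {T continuous linear on X : N_j(Tx) ≤ M_j · N_{k_j}(x) for every j ≥ 1 and every x ∈ X}, endowed with the topology of pointwise convergence on X, is a Polish space (separable and completely metrizable). -/
/-!
Restriction to a countable dense set `D ⊆ X` maps the operators in question into the Polish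
space `X^D`. The uniform seminorm bounds make the family equicontinuous, so pointwise convergence
on `D` propagates to all of `X`: the restriction map is an embedding, and its range is closed,
since a limit of restrictions yields operators that are pointwise Cauchy, whose pointwise limit
is again a bounded operator. Here one needs that a Polish group is complete for its group
uniformity: it is a dense Gδ in its completion, and so are its translates, so any two of them
meet.
-/

open Filter Topology Set TopologicalSpace

theorem comap_nhds_neBot_of_mem_closure_range {α X : Type*} [TopologicalSpace X] {f : α → X}
    {x : X} (hx : x ∈ closure (range f)) : (comap f (𝓝 x)).NeBot :=
  comap_neBot fun t ht => by
    obtain ⟨_, hyt, a, rfl⟩ := mem_closure_iff_nhds.1 hx t ht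
    exact ⟨a, hyt⟩

theorem Topology.IsEmbedding.isGδ_range {β M : Type*} [TopologicalSpace β]
    [IsCompletelyMetrizableSpace β] [TopologicalSpace M] [MetrizableSpace M] {f : β → M}
    (hf : IsEmbedding f) : IsGδ (range f) := by
  let := completelyMetrizableMetric β
  have := complete_completelyMetrizableMetric β
  let := metrizableSpaceMetric M
  -- `range f` consists of the points of its closure at which `f⁻¹` has oscillation zero
  set U : ℕ → Set M := fun n =>
    ⋃₀ {V | IsOpen V ∧ ∀ a b, f a ∈ V → f b ∈ V → dist a b < 1 / (n + 1)}
  have range_subset : ∀ n, range f ⊆ U n := by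
    rintro n _ ⟨a, rfl⟩
    obtain ⟨V, hV_open, hV⟩ := hf.isInducing.isOpen_iff.1 (Metric.isOpen_ball (x := a)
      (ε := 1 / (2 * (n + 1))))
    refine ⟨V, ⟨hV_open, fun b c hb hc => ?_⟩, ?_⟩
    · rw [← mem_preimage, hV, Metric.mem_ball] at hb hc
      calc dist b c ≤ dist b a + dist c a := dist_triangle_right _ _ _
        _ < 1 / (2 * (n + 1)) + 1 / (2 * (n + 1)) := add_lt_add hb hc
        _ = 1 / (n + 1) := by field_simp; ring
    · rw [← mem_preimage, hV]
      exact Metric.mem_ball_self (by positivity)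
  have subset_range : closure (range f) ∩ ⋂ n, U n ⊆ range f := by
    rintro x ⟨hx_closure, hx_U⟩
    have := comap_nhds_neBot_of_mem_closure_range hx_closure
    have hcauchy : Cauchy (comap f (𝓝 x)) := by
      refine Metric.cauchy_iff.2 ⟨‹_›, fun ε hε => ?_⟩
      obtain ⟨n, hn⟩ := exists_nat_one_div_lt hε
      obtain ⟨V, ⟨hV_open, hV⟩, hxV⟩ := mem_sUnion.1 (mem_iInter.1 hx_U n)
      exact ⟨f ⁻¹' V, preimage_mem_comap (hV_open.mem_nhds hxV),
        fun a ha b hb => (hV a b ha hb).trans hn⟩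
    obtain ⟨a, ha⟩ := CompleteSpace.complete hcauchy
    exact ⟨a, tendsto_nhds_unique ((hf.continuous.tendsto a).mono_left ha) tendsto_comap⟩
  rw [(subset_inter subset_closure (subset_iInter range_subset)).antisymm subset_range]
  exact isClosed_closure.isGδ.inter (.iInter fun n => (isOpen_sUnion fun V hV => hV.1).isGδ)

theorem IsUniformAddGroup.completeSpace_of_isCompletelyMetrizableSpace {G : Type*} [AddGroup G]
    [UniformSpace G] [IsUniformAddGroup G] [IsCompletelyMetrizableSpace G] : CompleteSpace G := by
  have := IsUniformAddGroup.uniformity_countably_generated (α := G)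
  let := UniformSpace.pseudoMetricSpace G
  have hemb := UniformSpace.Completion.isUniformEmbedding_coe G
  set s := range ((↑) : G → UniformSpace.Completion G)
  have hs_Gδ : IsGδ s := hemb.isEmbedding.isGδ_range
  have hs_dense : Dense s := UniformSpace.Completion.denseRange_coe
  -- `s` and `{y | -y + h ∈ s}` are dense Gδ subsets of the completion, so they meet
  have mem_s : ∀ h, h ∈ s := by
    intro h
    let e := (Homeomorph.neg _).trans (Homeomorph.addRight h)
    obtain ⟨_, ⟨a, rfl⟩, b, hb⟩ := (hs_dense.inter_of_Gδ hs_Gδ (hs_Gδ.preimage e.continuous)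
      (hs_dense.preimage e.isOpenMap)).nonempty
    refine ⟨a + b, ?_⟩
    rw [UniformSpace.Completion.coe_add, hb]
    exact add_neg_cancel_left _ _
  rw [completeSpace_iff_isComplete_range hemb.isUniformInducing]
  change IsComplete s
  rw [eq_univ_of_forall mem_s]
  exact isComplete_univ

theorem exists_tendsto_of_tendsto_sub_prod {G α : Type*} [AddCommGroup G] [TopologicalSpace G]
    [IsTopologicalAddGroup G] [IsCompletelyMetrizableSpace G] {l : Filter α} [l.NeBot]
    {u : α → G} (h : Tendsto (fun p : α × α => u p.2 - u p.1) (l ×ˢ l) (𝓝 0)) :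
    ∃ y, Tendsto u l (𝓝 y) := by
  let := IsTopologicalAddGroup.rightUniformSpace G
  have := isUniformAddGroup_of_addCommGroup (G := G)
  have := IsUniformAddGroup.completeSpace_of_isCompletelyMetrizableSpace (G := G)
  refine CompleteSpace.complete (cauchy_map_iff.2 ⟨‹_›, ?_⟩)
  rwa [uniformity_eq_comap_nhds_zero, tendsto_comap_iff]

section PointwiseBoundedOperators

variable {𝕜 E F ι ι' : Type*} [NormedField 𝕜] [AddCommGroup E] [Module 𝕜 E] [TopologicalSpace E]
  [AddCommGroup F] [Module 𝕜 F] [TopologicalSpace F] {p : ι' → Seminorm 𝕜 E}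
  {q : ι → Seminorm 𝕜 F} {M : ι → ℝ} {k : ι → ι'}

theorem seminorm_sub_apply_le {S T : E →L[𝕜] F} (hS : ∀ j x, q j (S x) ≤ M j * p (k j) x)
    (hT : ∀ j x, q j (T x) ≤ M j * p (k j) x) (j : ι) (x d : E) :
    q j (S x - T x) ≤ q j (S d - T d) + 2 * (M j * p (k j) (x - d)) := by
  have hsplit : S x - T x = S (x - d) + (S d - T d) - T (x - d) := by
    simp only [map_sub]; abel
  calc q j (S x - T x) ≤ q j (S (x - d)) + q j (S d - T d) + q j (T (x - d)) := by
        rw [hsplit]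
        exact (map_sub_le_add _ _ _).trans (add_le_add_left (map_add_le_add _ _ _) _)
    _ ≤ M j * p (k j) (x - d) + q j (S d - T d) + M j * p (k j) (x - d) := by
        gcongr
        exacts [hS j _, hT j _]
    _ = q j (S d - T d) + 2 * (M j * p (k j) (x - d)) := by ring

theorem tendsto_sub_apply_of_dense {α : Type*} (hp : WithSeminorms p) (hq : WithSeminorms q)
    {D : Set E} (hD : Dense D) {l : Filter α} {S T : α → E →L[𝕜] F}
    (hS : ∀ a j x, q j (S a x) ≤ M j * p (k j) x) (hT : ∀ a j x, q j (T a x) ≤ M j * p (k j) x)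
    (hD_tendsto : ∀ d ∈ D, Tendsto (fun a => S a d - T a d) l (𝓝 0)) (x : E) :
    Tendsto (fun a => S a x - T a x) l (𝓝 0) := by
  have := hp.topologicalAddGroup
  rw [hq.tendsto_nhds]
  intro j ε hε
  have hopen : IsOpen {y | M j * p (k j) (x - y) < ε / 3} :=
    isOpen_lt (continuous_const.mul ((hp.continuous_seminorm _).comp
      (continuous_const.sub continuous_id))) continuous_const
  obtain ⟨d, hdD, hd⟩ := hD.exists_mem_open hopen ⟨x, by simpa using hε⟩
  filter_upwards [(hq.tendsto_nhds _ _).1 (hD_tendsto d hdD) j (ε / 3) (by positivity)] with a ha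
  rw [sub_zero] at ha ⊢
  calc q j (S a x - T a x) ≤ q j (S a d - T a d) + 2 * (M j * p (k j) (x - d)) :=
        seminorm_sub_apply_le (hS a) (hT a) j x d
    _ < ε / 3 + 2 * (ε / 3) := by gcongr; exact hd
    _ = ε := by ring

theorem exists_clm_tendsto_apply_of_seminorm_bound [T2Space F] {α : Type*} (hp : WithSeminorms p)
    (hq : WithSeminorms q) {l : Filter α} [l.NeBot] {S : α → E →L[𝕜] F}
    (hS : ∀ a j x, q j (S a x) ≤ M j * p (k j) x)
    (hlim : ∀ x, ∃ y, Tendsto (fun a => S a x) l (𝓝 y)) :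
    ∃ T : E →L[𝕜] F, (∀ j x, q j (T x) ≤ M j * p (k j) x) ∧
      ∀ x, Tendsto (fun a => S a x) l (𝓝 (T x)) := by
  have := hq.topologicalAddGroup
  have := hq.continuousSMul
  choose f hf using hlim
  have hf_bound : ∀ j x, q j (f x) ≤ M j * p (k j) x := fun j x =>
    le_of_tendsto (((hq.continuous_seminorm j).tendsto _).comp (hf x))
      (.of_forall fun a => hS a j x)
  let T : E →ₗ[𝕜] F :=
    { toFun := f
      map_add' := fun x y => tendsto_nhds_unique ((hf (x + y)).congr fun a => map_add _ _ _)
        ((hf x).add (hf y))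
      map_smul' := fun c x => tendsto_nhds_unique ((hf (c • x)).congr fun a => map_smul _ _ _)
        ((hf x).const_smul c) }
  have hT_bounded : Seminorm.IsBounded p q T := fun j =>
    ⟨{k j}, (M j).toNNReal, fun x => by
      simp only [Seminorm.comp_apply, Finset.sup_singleton, smul_apply, NNReal.smul_def,
        smul_eq_mul]
      exact (hf_bound j x).trans (by gcongr; exact Real.le_coe_toNNReal _)⟩
  exact ⟨⟨T, hp.continuous_of_isBounded hq T hT_bounded⟩, hf_bound, hf⟩

theorem polishSpace_seminorm_bounded_clm [SeparableSpace E] [PolishSpace F]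
    (hp : WithSeminorms p) (hq : WithSeminorms q) :
    @PolishSpace {T : E →L[𝕜] F // ∀ j x, q j (T x) ≤ M j * p (k j) x}
      (induced (fun T => (⇑T.1 : E → F)) Pi.topologicalSpace) := by
  let A := {T : E →L[𝕜] F // ∀ j x, q j (T x) ≤ M j * p (k j) x}
  let _ : TopologicalSpace A := induced (fun T => (⇑T.1 : E → F)) Pi.topologicalSpace
  have := hq.topologicalAddGroup
  obtain ⟨D, hD_countable, hD⟩ := exists_countable_dense E
  have := hD_countable.to_subtype
  let Φ : A → (D → F) := fun T d => T.1 d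
  have hΦ_inducing : IsInducing Φ := by
    refine isInducing_iff_nhds.2 fun T => (nhds_induced _ _).trans (le_antisymm ?_ ?_)
    · exact (((continuous_pi fun d : D => continuous_apply d.1).tendsto _).comp
        tendsto_comap).le_comap
    · refine (tendsto_pi_nhds.2 fun x => tendsto_sub_nhds_zero_iff.1 ?_).le_comap
      refine tendsto_sub_apply_of_dense (S := Subtype.val) (T := fun _ => T.1) hp hq hD
        (fun S => S.2) (fun _ => T.2) (fun d hd => ?_) x
      exact tendsto_sub_nhds_zero_iff.2 (tendsto_pi_nhds.1 (tendsto_comap (f := Φ)) ⟨d, hd⟩)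
  have hΦ_injective : Function.Injective Φ := fun S T h =>
    Subtype.ext <| DFunLike.coe_injective <|
      Continuous.ext_on hD S.1.continuous T.1.continuous fun x hx => congrFun h ⟨x, hx⟩
  have hΦ_closed : IsClosed (range Φ) := by
    refine isClosed_of_closure_subset fun g hg => ?_
    let l := comap Φ (𝓝 g)
    have := comap_nhds_neBot_of_mem_closure_range hg
    have hl : ∀ d : D, Tendsto (fun S : A => S.1 d) l (𝓝 (g d)) :=
      tendsto_pi_nhds.1 tendsto_comap
    have hcauchy (x : E) :
        Tendsto (fun P : A × A => P.2.1 x - P.1.1 x) (l ×ˢ l) (𝓝 0) := by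
      refine tendsto_sub_apply_of_dense (S := fun P : A × A => P.2.1)
        (T := fun P : A × A => P.1.1) hp hq hD (fun P => P.2.2) (fun P => P.1.2) (fun d hd => ?_) x
      simpa using ((hl ⟨d, hd⟩).comp tendsto_snd).sub ((hl ⟨d, hd⟩).comp tendsto_fst)
    obtain ⟨T, hT_bound, hT⟩ :=
      exists_clm_tendsto_apply_of_seminorm_bound hp hq (fun S : A => S.2) fun x =>
        exists_tendsto_of_tendsto_sub_prod (hcauchy x)
    exact ⟨⟨T, hT_bound⟩, funext fun d => tendsto_nhds_unique (hT d) (hl d)⟩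
  exact (IsClosedEmbedding.mk ⟨hΦ_inducing, hΦ_injective⟩ hΦ_closed).polishSpace

end PointwiseBoundedOperators

theorem stmt2_general (X : Type*) [TopologicalSpace X] [AddCommGroup X] [Module ℂ X]
    [PolishSpace X]
    (N : ℕ → Seminorm ℂ X) (hN : WithSeminorms fun j : ℕ => N j)
    (M : ℕ → ℝ) (k : ℕ → ℕ) :
    @PolishSpace {T : X →L[ℂ] X // ∀ (j : ℕ) (x : X), N j (T x) ≤ M j * N (k j) x}
      (TopologicalSpace.induced (fun T => (⇑T.1 : X → X)) Pi.topologicalSpace) :=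
  polishSpace_seminorm_bounded_clm hN hN

/-- For a separable Fréchet space `X` (a separable, completely metrizable topological vector
space, i.e. a Polish topological vector space, whose topology is induced by a countable family
of seminorms `(N_j)`), and for sequences `(M_j)` of positive reals and `(k_j)` of positive
integers, the space `L_{(M_j),(k_j)}(X)` of continuous linear operators `T` with
`N_j(Tx) ≤ M_j N_{k_j}(x)` for all `j` and `x`, endowed with the topology of pointwise
convergence, is a Polish space. -/
theorem stmt2 (X : Type*) [TopologicalSpace X] [AddCommGroup X] [Module ℂ X]
    [IsTopologicalAddGroup X] [ContinuousSMul ℂ X] [PolishSpace X]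
    (N : ℕ → Seminorm ℂ X) (hN : WithSeminorms fun j : ℕ => N j)
    (M : ℕ → ℝ) (hM : ∀ j : ℕ, 0 < M j) (k : ℕ → ℕ) :
    @PolishSpace {T : X →L[ℂ] X // ∀ (j : ℕ) (x : X), N j (T x) ≤ M j * N (k j) x}
      (TopologicalSpace.induced (fun T => (⇑T.1 : X → X)) Pi.topologicalSpace) :=
  stmt2_general X N hN M k
end

section
/- Let B be a continuous linear operator on H(ℂ) such that B = T_n ∘ B ∘ T_n for some integer n ≥ 0, and let δ > 0. Then for every λ ∈ ℂ and every polynomial P of degree at most n, there exists a unique entire function f such that (B + δ·S_{n+1}) f = λ f and T_n f = P. In particular, the eigenspace ker(B + δ·S_{n+1} − λ·I) has dimension n+1. -/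
open Filter Topology

noncomputable section

set_option synthInstance.maxHeartbeats 1000000
set_option maxHeartbeats 1000000

/-- The subalgebra of entire functions inside `ℂ → ℂ`. -/
def EntireSubalgebra : Subalgebra ℂ (ℂ → ℂ) where
  carrier := {f | Differentiable ℂ f}
  mul_mem' := fun hf hg => hf.mul hg
  add_mem' := fun hf hg => hf.add hg
  algebraMap_mem' := fun c => differentiable_const c

/-- The space `H(ℂ)` of entire functions. -/
abbrev Entire : Type := ↥EntireSubalgebra

instance : CommRing Entire := inferInstance
instance : Algebra ℂ Entire := inferInstance
instance : AddCommGroup Entire := inferInstance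
instance : Module ℂ Entire := inferInstance

theorem Entire.diff (f : Entire) : Differentiable ℂ (f : ℂ → ℂ) := f.2

/-- `H(ℂ)` carries the topology of uniform convergence on compact subsets of `ℂ`,
i.e. the topology induced by the compact-open topology on `C(ℂ, ℂ)`. -/
instance Entire.topologicalSpace : TopologicalSpace Entire :=
  TopologicalSpace.induced
    (fun f : Entire => ContinuousMap.mk (f : ℂ → ℂ) (Entire.diff f).continuous)
    inferInstance

/-- The `m`-th Taylor coefficient of `f` at `0`. -/
def taylorCoeff (f : ℂ → ℂ) (m : ℕ) : ℂ := iteratedDeriv m f 0 / m.factorial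

/-- The seminorm `N_j(f) = ∑_{m ≥ 0} |a_m| j^m` where `f = ∑ a_m z^m`. -/
def entN (j : ℕ) (f : ℂ → ℂ) : ℝ := ∑' m : ℕ, ‖taylorCoeff f m‖ * (j : ℝ) ^ m

/-- The set `L_{(M_j),(k_j)}` of continuous linear operators on `H(ℂ)` with
`N_j(Tf) ≤ M_j N_{k_j}(f)` for all `j ≥ 1`. -/
def Lmk (M : ℕ → ℝ) (k : ℕ → ℕ) : Set (Entire →L[ℂ] Entire) :=
  {T | ∀ j : ℕ, 1 ≤ j → ∀ f : Entire, entN j (T f) ≤ M j * entN (k j) f}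

/-- The strong operator topology (pointwise convergence) on operators on `H(ℂ)`. -/
def sotCLM : TopologicalSpace (Entire →L[ℂ] Entire) :=
  TopologicalSpace.induced (fun T : Entire →L[ℂ] Entire => (⇑T : Entire → Entire))
    Pi.topologicalSpace

/-- The strong operator topology on `L_{(M_j),(k_j)}`. -/
def sotLmk (M : ℕ → ℝ) (k : ℕ → ℕ) : TopologicalSpace ↥(Lmk M k) :=
  TopologicalSpace.induced Subtype.val sotCLM

/-- The monomial `z ↦ z^k` as an entire function. -/
def monE (k : ℕ) : Entire := ⟨fun z => z ^ k, differentiable_pow k⟩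

/-- The exponential `z ↦ exp(β z)` as an entire function. -/
def expE (b : ℂ) : Entire :=
  ⟨fun z => Complex.exp (b * z), ((differentiable_const b).mul differentiable_id).cexp⟩

/-- The Taylor truncation operator `T_n`. -/
def trunc (n : ℕ) (f : Entire) : Entire :=
  ⟨fun z => ∑ j ∈ Finset.range (n + 1), taylorCoeff f j * z ^ j, by
    apply Differentiable.fun_sum
    exact fun j _ => (differentiable_const _).mul (differentiable_pow j)⟩

theorem Entire.diff_iteratedDeriv (f : Entire) (m : ℕ) :
    Differentiable ℂ (iteratedDeriv m (f : ℂ → ℂ)) :=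
  ContDiff.differentiable_iteratedDeriv m (f.diff.contDiff (n := (⊤ : ℕ∞)))
    (by exact_mod_cast lt_of_lt_of_le (WithTop.coe_lt_top m) le_top)

/-- The operator `S_m = (1/m!) D^m` as a map on entire functions. -/
def SEnt (m : ℕ) (f : Entire) : Entire :=
  ⟨fun z => ((m.factorial : ℂ))⁻¹ * iteratedDeriv m (f : ℂ → ℂ) z,
    (differentiable_const _).mul (f.diff_iteratedDeriv m)⟩

/-- The map `f ↦ B f + δ • S_{n+1} f`. -/
def applyA (B : Entire →L[ℂ] Entire) (δ : ℝ) (n : ℕ) (f : Entire) : Entire :=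
  B f + (δ : ℂ) • SEnt (n + 1) f

/-- `f` is a hypercyclic vector for the map `g`. -/
def HypVec (g : Entire → Entire) (f : Entire) : Prop :=
  Dense (Set.range fun m : ℕ => g^[m] f)

/-- `g` admits a hypercyclic algebra: a nonzero (non-unital) subalgebra of `H(ℂ)` all of whose
nonzero elements are hypercyclic vectors for `g`. -/
def HasHypAlgebra (g : Entire → Entire) : Prop :=
  ∃ S : NonUnitalSubalgebra ℂ Entire,
    (∃ f ∈ S, f ≠ 0) ∧ ∀ f ∈ S, f ≠ 0 → HypVec g f

/-!
Write `dₘ(f) = f⁽ᵐ⁾(0)`. Since `B = Tₙ B Tₙ`, the function `B f` is a polynomial of degree `≤ n`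
depending only on `d₀(f), …, dₙ(f)`, and comparing `m`-th derivatives at `0` turns
`(B + δ Sₙ₊₁) f = λ f` into the recursion `dₘ₊ₙ₊₁(f) = (n+1)!/δ · (λ dₘ(f) - dₘ(B f))`.
So an eigenfunction is determined by `d₀(f), …, dₙ(f)`; conversely any choice of these values
extends through the recursion to a sequence of at most exponential growth, which is the sequence
of derivatives at `0` of an entire function. The eigenspace is therefore isomorphic to `ℂⁿ⁺¹`.
-/

open scoped Nat

lemma iteratedDeriv_iteratedDeriv {𝕜 F : Type*} [NontriviallyNormedField 𝕜] [NormedAddCommGroup F]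
    [NormedSpace 𝕜 F] (m k : ℕ) (f : 𝕜 → F) :
    iteratedDeriv m (iteratedDeriv k f) = iteratedDeriv (m + k) f := by
  simp only [iteratedDeriv_eq_iterate, Function.iterate_add_apply]

lemma iteratedDeriv_sum_range_mul_pow_zero {𝕜 : Type*} [NontriviallyNormedField 𝕜]
    (c : ℕ → 𝕜) (N m : ℕ) :
    iteratedDeriv m (fun z => ∑ j ∈ Finset.range N, c j * z ^ j) 0 =
      if m < N then m ! * c m else 0 := by
  rw [iteratedDeriv_fun_sum (fun j _ => by fun_prop)]
  simp only [iteratedDeriv_const_mul_field, iteratedDeriv_fun_pow_zero]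
  simp [mul_comm]

open Polynomial in
lemma iteratedDeriv_polynomial_eval_zero {𝕜 : Type*} [NontriviallyNormedField 𝕜] (P : 𝕜[X])
    (m : ℕ) : iteratedDeriv m (fun z => P.eval z) 0 = m ! * P.coeff m := by
  simp_rw [eval_eq_sum_range, iteratedDeriv_sum_range_mul_pow_zero]
  split_ifs with hm
  · rfl
  · rw [coeff_eq_zero_of_natDegree_lt (by omega), mul_zero]

lemma norm_le_sum_range_norm {E : Type*} [SeminormedAddCommGroup E] {q : ℕ → E} {n : ℕ}
    (hq : ∀ m, n < m → q m = 0) (m : ℕ) : ‖q m‖ ≤ ∑ j ∈ Finset.range (n + 1), ‖q j‖ := by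
  rcases le_or_gt m n with hm | hm
  · exact Finset.single_le_sum (fun j _ => norm_nonneg (q j)) (Finset.mem_range.2 (by omega))
  · rw [hq m hm, norm_zero]
    exact Finset.sum_nonneg fun j _ => norm_nonneg (q j)

lemma exists_le_mul_pow_of_le_mul_add {u : ℕ → ℝ} {p : ℕ} (hp : 0 < p) {K C : ℝ} (hK : 0 ≤ K)
    (hC : 0 ≤ C) (h : ∀ k, u (k + p) ≤ K * u k + C) : ∃ A B : ℝ, ∀ m, u m ≤ A * B ^ m := by
  set A := 1 + ∑ j ∈ Finset.range p, |u j|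
  set B := 1 + K + C
  have hA : 1 ≤ A := le_add_of_nonneg_right (Finset.sum_nonneg fun j _ => abs_nonneg _)
  have hB : 1 ≤ B := by simp only [B]; linarith
  refine ⟨A, B, fun m => ?_⟩
  induction m using Nat.strong_induction_on with
  | _ m ih =>
    rcases lt_or_ge m p with hm | hm
    · calc u m ≤ ∑ j ∈ Finset.range p, |u j| :=
            (le_abs_self _).trans (Finset.single_le_sum (fun j _ => abs_nonneg (u j))
              (Finset.mem_range.2 hm))
        _ ≤ A * 1 := by simp only [A]; linarith
        _ ≤ A * B ^ m := by gcongr; exact one_le_pow₀ hB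
    · obtain ⟨k, rfl⟩ : ∃ k, m = k + p := ⟨m - p, by omega⟩
      have hABk : 1 ≤ A * B ^ k := one_le_mul_of_one_le_of_one_le hA (one_le_pow₀ hB)
      calc u (k + p) ≤ K * u k + C := h k
        _ ≤ K * (A * B ^ k) + C * (A * B ^ k) := by
            gcongr
            · exact ih k (by omega)
            · exact le_mul_of_one_le_right hC hABk
        _ ≤ B * (A * B ^ k) := by simp only [B]; nlinarith
        _ = A * B ^ (k + 1) := by ring
        _ ≤ A * B ^ (k + p) := by gcongr; omega

def strideRec {α : Type*} (n : ℕ) (v : ℕ → α) (step : ℕ → α → α) : ℕ → α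
  | m => if m ≤ n then v m else step (m - (n + 1)) (strideRec n v step (m - (n + 1)))
decreasing_by omega

lemma strideRec_of_le {α : Type*} {n m : ℕ} (v : ℕ → α) (step : ℕ → α → α) (hm : m ≤ n) :
    strideRec n v step m = v m := by
  rw [strideRec, if_pos hm]

lemma strideRec_add {α : Type*} (n : ℕ) (v : ℕ → α) (step : ℕ → α → α) (k : ℕ) :
    strideRec n v step (k + (n + 1)) = step k (strideRec n v step k) := by
  rw [strideRec, if_neg (by omega), Nat.add_sub_cancel]

namespace Entire

def derivsAtZero : Entire →ₗ[ℂ] ℕ → ℂ where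
  toFun f m := iteratedDeriv m (f : ℂ → ℂ) 0
  map_add' f g := funext fun _ =>
    iteratedDeriv_add f.diff.contDiff.contDiffAt g.diff.contDiff.contDiffAt
  map_smul' c _ := funext fun _ => iteratedDeriv_const_smul_field c _

lemma derivsAtZero_apply (f : Entire) (m : ℕ) :
    derivsAtZero f m = iteratedDeriv m (f : ℂ → ℂ) 0 := rfl

lemma derivsAtZero_injective : Function.Injective derivsAtZero := by
  intro f g h
  ext z
  rw [← Complex.taylorSeries_eq_of_entire' 0 z f.diff,
    ← Complex.taylorSeries_eq_of_entire' 0 z g.diff]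
  simp only [← derivsAtZero_apply, h]

lemma exists_derivsAtZero_eq {d : ℕ → ℂ} {C r : ℝ} (hd : ∀ m, ‖d m‖ ≤ C * r ^ m) :
    ∃ f : Entire, derivsAtZero f = d := by
  set p := FormalMultilinearSeries.ofScalars ℂ fun m => d m / m.factorial
  have hp : p.radius = ⊤ := by
    refine p.radius_eq_top_of_summable_norm fun s => ?_
    refine .of_nonneg_of_le (fun m => by positivity) (fun m => ?_)
      ((Real.summable_pow_div_factorial (r * s)).mul_left C)
    rw [FormalMultilinearSeries.ofScalars_norm, norm_div, Complex.norm_natCast,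
      div_mul_eq_mul_div, mul_pow, ← mul_div_assoc, ← mul_assoc]
    gcongr
    exact hd m
  have hsum : HasFPowerSeriesOnBall p.sum p 0 ⊤ := hp ▸ p.hasFPowerSeriesOnBall (by simp [hp])
  have hdiff : Differentiable ℂ p.sum := fun z =>
    (hsum.analyticAt_of_mem (by simp)).differentiableAt
  refine ⟨⟨p.sum, hdiff⟩, funext fun m => ?_⟩
  have hcoeff := FormalMultilinearSeries.ofScalars_series_injective ℂ ℂ
    (hsum.hasFPowerSeriesAt.eq_formalMultilinearSeries (hsum.analyticAt.hasFPowerSeriesAt))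
  have hm := congrFun hcoeff m
  rw [div_left_inj' (by exact_mod_cast m.factorial_ne_zero)] at hm
  exact hm.symm

lemma derivsAtZero_SEnt (k : ℕ) (f : Entire) (m : ℕ) :
    derivsAtZero (SEnt k f) m = (k ! : ℂ)⁻¹ * derivsAtZero f (m + k) := by
  change iteratedDeriv m (fun z => (k ! : ℂ)⁻¹ * iteratedDeriv k (f : ℂ → ℂ) z) 0 = _
  rw [iteratedDeriv_const_mul_field, iteratedDeriv_iteratedDeriv, derivsAtZero_apply]

lemma derivsAtZero_trunc (n : ℕ) (f : Entire) (m : ℕ) :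
    derivsAtZero (trunc n f) m = if m ≤ n then derivsAtZero f m else 0 := by
  change iteratedDeriv m (fun z => ∑ j ∈ Finset.range (n + 1), taylorCoeff f j * z ^ j) 0 = _
  simp only [iteratedDeriv_sum_range_mul_pow_zero, taylorCoeff, Nat.lt_succ_iff,
    mul_div_cancel₀ _ (Nat.cast_ne_zero.2 m.factorial_ne_zero : (m ! : ℂ) ≠ 0), derivsAtZero_apply]

lemma trunc_eq_trunc_iff {n : ℕ} {f g : Entire} :
    trunc n f = trunc n g ↔ ∀ m ≤ n, derivsAtZero f m = derivsAtZero g m := by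
  refine ⟨fun h m hm => ?_, fun h => derivsAtZero_injective (funext fun m => ?_)⟩
  · simpa [derivsAtZero_trunc, hm] using congrFun (congrArg derivsAtZero h) m
  · simp only [derivsAtZero_trunc]
    split_ifs with hm
    exacts [h m hm, rfl]

lemma trunc_polynomial {n : ℕ} {P : Polynomial ℂ} (hP : P.degree ≤ n) :
    trunc n ⟨fun z => P.eval z, P.differentiable⟩ = ⟨fun z => P.eval z, P.differentiable⟩ := by
  refine derivsAtZero_injective (funext fun m => ?_)
  rw [derivsAtZero_trunc]
  split_ifs with hm
  · rfl
  · rw [derivsAtZero_apply, iteratedDeriv_polynomial_eval_zero,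
      Polynomial.coeff_eq_zero_of_degree_lt (hP.trans_lt (by exact_mod_cast (not_le.1 hm))),
      mul_zero]

def SEntₗ (k : ℕ) : Entire →ₗ[ℂ] Entire where
  toFun := SEnt k
  map_add' f g := derivsAtZero_injective <| funext fun m => by
    simp only [map_add, Pi.add_apply, derivsAtZero_SEnt, mul_add]
  map_smul' c f := derivsAtZero_injective <| funext fun m => by
    simp only [map_smul, Pi.smul_apply, smul_eq_mul, derivsAtZero_SEnt, RingHom.id_apply]
    ring

def applyAₗ (B : Entire →L[ℂ] Entire) (δ : ℝ) (n : ℕ) : Module.End ℂ Entire :=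
  B.toLinearMap + (δ : ℂ) • SEntₗ (n + 1)

section Eigenspace

variable {B : Entire →L[ℂ] Entire} {n : ℕ} {δ : ℝ} {lam : ℂ}

lemma mem_eigenspace_applyAₗ_iff {f : Entire} :
    f ∈ (applyAₗ B δ n).eigenspace lam ↔ applyA B δ n f = lam • f :=
  Module.End.mem_eigenspace_iff

lemma mem_eigenspace_applyAₗ_iff_derivsAtZero (hδ : δ ≠ 0) {f : Entire} :
    f ∈ (applyAₗ B δ n).eigenspace lam ↔ ∀ m, derivsAtZero f (m + (n + 1)) =
      ((n + 1)! / δ : ℂ) * (lam * derivsAtZero f m - derivsAtZero (B f) m) := by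
  have hδ' : (δ : ℂ) ≠ 0 := by exact_mod_cast hδ
  have hfac : ((n + 1)! : ℂ) ≠ 0 := by exact_mod_cast (n + 1).factorial_ne_zero
  rw [mem_eigenspace_applyAₗ_iff, ← derivsAtZero_injective.eq_iff, funext_iff]
  refine forall_congr' fun m => ?_
  simp only [applyA, map_add, map_smul, Pi.add_apply, Pi.smul_apply, smul_eq_mul,
    derivsAtZero_SEnt]
  constructor <;> intro h
  · rw [← h]
    field_simp
    ring
  · rw [h]
    field_simp
    ring

lemma derivsAtZero_image_eq_zero_of_lt (hB : ∀ f, B f = trunc n (B (trunc n f))) (f : Entire)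
    {m : ℕ} (hm : n < m) : derivsAtZero (B f) m = 0 := by
  rw [hB, derivsAtZero_trunc, if_neg (not_le.2 hm)]

lemma eq_of_mem_eigenspace_applyAₗ_of_trunc_eq (hB : ∀ f, B f = trunc n (B (trunc n f)))
    (hδ : δ ≠ 0) {f g : Entire} (hf : f ∈ (applyAₗ B δ n).eigenspace lam)
    (hg : g ∈ (applyAₗ B δ n).eigenspace lam) (h : trunc n f = trunc n g) : f = g := by
  have hBfg : B f = B g := by rw [hB f, hB g, h]
  refine derivsAtZero_injective (funext fun m => ?_)
  induction m using Nat.strong_induction_on with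
  | _ m ih =>
    rcases le_or_gt m n with hm | hm
    · exact trunc_eq_trunc_iff.1 h m hm
    · obtain ⟨k, rfl⟩ : ∃ k, m = k + (n + 1) := ⟨m - (n + 1), by omega⟩
      rw [(mem_eigenspace_applyAₗ_iff_derivsAtZero hδ).1 hf k,
        (mem_eigenspace_applyAₗ_iff_derivsAtZero hδ).1 hg k, ih k (by omega), hBfg]

lemma exists_mem_eigenspace_applyAₗ_trunc_eq (hB : ∀ f, B f = trunc n (B (trunc n f)))
    (hδ : δ ≠ 0) (p : Entire) : ∃ f ∈ (applyAₗ B δ n).eigenspace lam, trunc n f = trunc n p := by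
  set q := derivsAtZero (B p)
  set c : ℂ := (n + 1)! / δ
  obtain ⟨d, hd_low, hd_step⟩ : ∃ d : ℕ → ℂ, (∀ m ≤ n, d m = derivsAtZero p m) ∧
      ∀ k, d (k + (n + 1)) = c * (lam * d k - q k) :=
    ⟨strideRec n (derivsAtZero p) fun k x => c * (lam * x - q k),
      fun m hm => strideRec_of_le _ _ hm, strideRec_add _ _ _⟩
  have hd : ∀ k, ‖d (k + (n + 1))‖ ≤
      ‖c‖ * ‖lam‖ * ‖d k‖ + ‖c‖ * ∑ j ∈ Finset.range (n + 1), ‖q j‖ := fun k => by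
    have hq : ‖q k‖ ≤ ∑ j ∈ Finset.range (n + 1), ‖q j‖ :=
      norm_le_sum_range_norm (fun m hm => derivsAtZero_image_eq_zero_of_lt hB p hm) k
    calc ‖d (k + (n + 1))‖ = ‖c‖ * ‖lam * d k - q k‖ := by rw [hd_step, norm_mul]
      _ ≤ ‖c‖ * (‖lam‖ * ‖d k‖ + ∑ j ∈ Finset.range (n + 1), ‖q j‖) := by
        gcongr
        exact (norm_sub_le _ _).trans (by rw [norm_mul]; gcongr)
      _ = _ := by ring
  obtain ⟨A, A', hA⟩ := exists_le_mul_pow_of_le_mul_add (u := fun m => ‖d m‖) n.succ_pos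
    (by positivity) (by positivity) hd
  obtain ⟨f, rfl⟩ := exists_derivsAtZero_eq hA
  have htrunc : trunc n f = trunc n p := trunc_eq_trunc_iff.2 hd_low
  have hBfp : B f = B p := by rw [hB f, hB p, htrunc]
  refine ⟨f, (mem_eigenspace_applyAₗ_iff_derivsAtZero hδ).2 fun k => ?_, htrunc⟩
  rw [hBfp, hd_step]

lemma finrank_eigenspace_applyAₗ (hB : ∀ f, B f = trunc n (B (trunc n f))) (hδ : δ ≠ 0) :
    Module.finrank ℂ ((applyAₗ B δ n).eigenspace lam) = n + 1 := by
  set W := (applyAₗ B δ n).eigenspace lam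
  let Φ : W →ₗ[ℂ] Fin (n + 1) → ℂ :=
    LinearMap.funLeft ℂ ℂ Fin.val ∘ₗ derivsAtZero ∘ₗ W.subtype
  refine (LinearEquiv.ofBijective Φ ⟨fun f g h => Subtype.ext ?_, fun v => ?_⟩).finrank_eq.trans
    (Module.finrank_fin_fun ℂ)
  · exact eq_of_mem_eigenspace_applyAₗ_of_trunc_eq hB hδ f.2 g.2
      (trunc_eq_trunc_iff.2 fun m hm => congrFun h ⟨m, by omega⟩)
  · set w : ℕ → ℂ := fun m => if h : m < n + 1 then v ⟨m, h⟩ else 0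
    obtain ⟨p, hp⟩ := exists_derivsAtZero_eq (C := ∑ j ∈ Finset.range (n + 1), ‖w j‖) (r := 1)
      fun m => by
        rw [one_pow, mul_one]
        exact norm_le_sum_range_norm (fun m hm => dif_neg (by omega)) m
    obtain ⟨f, hf, hfp⟩ := exists_mem_eigenspace_applyAₗ_trunc_eq hB hδ p
    refine ⟨⟨f, hf⟩, funext fun i => ?_⟩
    exact (trunc_eq_trunc_iff.1 hfp i (by omega)).trans ((congrFun hp i).trans (dif_pos i.2))

end Eigenspace

end Entire

theorem stmt11 (B : Entire →L[ℂ] Entire) (n : ℕ)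
    (hB : ∀ f : Entire, B f = trunc n (B (trunc n f))) (δ : ℝ) (hδ : 0 < δ)
    (lam : ℂ) (P : Polynomial ℂ) (hP : P.degree ≤ n) :
    (∃! f : Entire, applyA B δ n f = lam • f ∧
        trunc n f = ⟨fun z => Polynomial.eval z P, P.differentiable⟩) ∧
      ∃ W : Submodule ℂ Entire,
        (W : Set Entire) = {f : Entire | applyA B δ n f = lam • f} ∧
        Module.finrank ℂ ↥W = n + 1 := by
  have hδ' : δ ≠ 0 := hδ.ne'
  refine ⟨?_, (Entire.applyAₗ B δ n).eigenspace lam,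
    Set.ext fun f => Entire.mem_eigenspace_applyAₗ_iff, Entire.finrank_eigenspace_applyAₗ hB hδ'⟩
  set Pe : Entire := ⟨fun z => Polynomial.eval z P, P.differentiable⟩
  obtain ⟨f, hf, hf_trunc⟩ := Entire.exists_mem_eigenspace_applyAₗ_trunc_eq hB hδ' (lam := lam) Pe
  rw [Entire.trunc_polynomial hP] at hf_trunc
  refine ⟨f, ⟨Entire.mem_eigenspace_applyAₗ_iff.1 hf, hf_trunc⟩, fun g ⟨hg, hg_trunc⟩ => ?_⟩
  exact Entire.eq_of_mem_eigenspace_applyAₗ_of_trunc_eq hB hδ'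
    (Entire.mem_eigenspace_applyAₗ_iff.2 hg) hf (hg_trunc.trans hf_trunc.symm)

end
end

section
/- Let n ≥ 0 and m ≥ 1 be integers, let x_0 > 0, and set φ(z) = (z/x_0)^{n+1} for z ∈ ℂ. For η > 0 and ε > 0 define 𝒜 = D(0,η) (the open disk of center 0 and radius η), ζ_j = x_0(1+ε)e^{2πi j/(n+1)} for j = 0, …, n, and ℬ = ⋃_{j=0}^n {ζ_j(1+it) : t ∈ [−η, η]}. Then there exist η > 0 and ε > 0 such that: (1) for every j = 1, …, m, every d = 0, …, j with d ≠ m, all ξ̃_1, …, ξ̃_{j−d} ∈ 𝒜 and all ξ_1, …, ξ_d ∈ ℬ, one has |φ(ξ̃_1 + ⋯ + ξ̃_{j−d} + (ξ_1 + ⋯ + ξ_d)/m)| < 1; and (2) for every l = 1, …, m and all ξ_1, …, ξ_l ∈ ℬ not all equal, one has |φ((ξ_1 + ⋯ + ξ_l)/m)| < |φ(ξ_1)|^{1/m} ⋯ |φ(ξ_l)|^{1/m}. -/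
/-!
Take `ε = η`. Every point of `ℬ` is `x₀(1+η) u (1+it)` with `u ^ (n+1) = 1` and `|t| ≤ η`, so its
modulus lies in `[x₀(1+η), x₀(1+η)²]`. In (1), and in (2) for `l < m`, at most `m - 1` points of `ℬ`
enter, divided by `m`, so for small `η` the argument of `φ` has modulus `< x₀`, while
`|φ(ξ_i)| ≥ 1`. For `l = m`, if two roots `u ≠ v` occur then `|u + v| ≤ δ < 2` with `δ` depending
only on `n` (finitely many roots, strict convexity of the norm), so `|ξ_1 + ⋯ + ξ_m| < m x₀(1+η)`
once `mη < 2 - δ`. If all roots agree, the claim becomes `|1 + i t̄| < ∏ |1 + i t_k|^{1/m}`, strict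
Jensen for `t ↦ log |1 + it| = ½ log(1 + t²)`, which is strictly convex on `[-1, 1]`.
-/

open Filter Topology

noncomputable section

/-- The set `ℬ = ⋃_{j=0}^n {ζ_j (1+it) : t ∈ [-η, η]}` where
`ζ_j = x₀ (1+ε) e^{2πij/(n+1)}`. -/
def Bset (n : ℕ) (x₀ η ε : ℝ) : Set ℂ :=
  {w : ℂ | ∃ j : ℕ, j ≤ n ∧ ∃ t : ℝ, |t| ≤ η ∧
    w = (x₀ * (1 + ε) : ℝ) * Complex.exp (2 * Real.pi * Complex.I * j / (n + 1)) *
      (1 + t * Complex.I)}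

open Complex

lemma norm_sum_fin_le_mul {E : Type*} [SeminormedAddCommGroup E] {k : ℕ} {C : ℝ}
    (f : Fin k → E) (hf : ∀ i, ‖f i‖ ≤ C) : ‖∑ i, f i‖ ≤ k * C :=
  (norm_sum_le_of_le _ fun i _ => hf i).trans_eq (by simp)

lemma norm_sum_le_norm_add_add_card_sub_two {E : Type*} [SeminormedAddCommGroup E] {ι : Type*}
    [Fintype ι] [DecidableEq ι] {f : ι → E} (hf : ∀ i, ‖f i‖ ≤ 1) {a b : ι} (hab : a ≠ b) :
    ‖∑ i, f i‖ ≤ ‖f a + f b‖ + (Fintype.card ι - 2) := by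
  have hcard : (Finset.univ \ {a, b}).card = Fintype.card ι - 2 := by
    rw [Finset.card_sdiff_of_subset (Finset.subset_univ _), Finset.card_pair hab,
      Finset.card_univ]
  have h2 : 2 ≤ Fintype.card ι := by
    simpa [Finset.card_pair hab] using Finset.card_le_univ {a, b}
  rw [← Finset.sum_sdiff (Finset.subset_univ {a, b}), Finset.sum_pair hab, add_comm]
  refine (norm_add_le _ _).trans (add_le_add_right ?_ _)
  calc ‖∑ i ∈ Finset.univ \ {a, b}, f i‖ ≤ ∑ i ∈ Finset.univ \ {a, b}, (1 : ℝ) :=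
        norm_sum_le_of_le _ fun i _ => hf i
    _ = Fintype.card ι - 2 := by
      rw [Finset.sum_const, hcard, nsmul_one, Nat.cast_sub h2, Nat.cast_ofNat]

lemma norm_add_lt_two_of_ne {E : Type*} [NormedAddCommGroup E] [NormedSpace ℝ E]
    [StrictConvexSpace ℝ E] {u v : E} (hu : ‖u‖ = 1) (hv : ‖v‖ = 1) (huv : u ≠ v) :
    ‖u + v‖ < 2 := by
  have := norm_add_lt_of_not_sameRay
    (mt (sameRay_iff_of_norm_eq (hu.trans hv.symm)).1 huv)
  linarith

lemma Set.Finite.exists_lt_two_norm_add_le {E : Type*} [NormedAddCommGroup E]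
    [NormedSpace ℝ E] [StrictConvexSpace ℝ E] {S : Set E} (hS : S.Finite)
    (hS1 : ∀ u ∈ S, ‖u‖ = 1) : ∃ δ < 2, ∀ u ∈ S, ∀ v ∈ S, u ≠ v → ‖u + v‖ ≤ δ := by
  have : ∀ᶠ δ in 𝓝[<] (2 : ℝ), ∀ p ∈ S ×ˢ S, p.1 ≠ p.2 → ‖p.1 + p.2‖ ≤ δ := by
    refine (eventually_all_finite (hS.prod hS)).2 fun p hp => ?_
    by_cases hne : p.1 = p.2
    · exact Eventually.of_forall fun _ h => absurd hne h
    · filter_upwards [Ioo_mem_nhdsLT (norm_add_lt_two_of_ne (hS1 _ hp.1) (hS1 _ hp.2) hne)]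
        with δ hδ _ using hδ.1.le
  obtain ⟨δ, hδ, hδ2⟩ := (this.and self_mem_nhdsWithin).exists
  exact ⟨δ, hδ2, fun u hu v hv => hδ (u, v) ⟨hu, hv⟩⟩

lemma exists_lt_two_norm_add_le_of_pow_eq_one (n : ℕ) :
    ∃ δ < 2, ∀ u v : ℂ, u ^ (n + 1) = 1 → v ^ (n + 1) = 1 → u ≠ v → ‖u + v‖ ≤ δ := by
  have hS : {u : ℂ | u ^ (n + 1) = 1}.Finite :=
    (Polynomial.nthRoots (n + 1) (1 : ℂ)).toFinset.finite_toSet.subset fun u hu => by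
      simpa [Polynomial.mem_nthRoots n.succ_pos] using hu
  obtain ⟨δ, hδ, h⟩ := hS.exists_lt_two_norm_add_le fun u hu =>
    norm_eq_one_of_pow_eq_one hu n.succ_ne_zero
  exact ⟨δ, hδ, fun u v hu hv => h u hu v hv⟩

lemma one_le_norm_one_add_mul_I (t : ℝ) : 1 ≤ ‖1 + t * I‖ := by
  simpa using abs_re_le_norm (1 + t * I)

lemma norm_one_add_mul_I_le (t : ℝ) : ‖1 + t * I‖ ≤ 1 + |t| := by
  simpa using norm_add_le (1 : ℂ) (t * I)

lemma strictConvexOn_log_norm_one_add_mul_I :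
    StrictConvexOn ℝ (Set.Icc (-1) 1) fun t : ℝ => Real.log ‖1 + t * I‖ := by
  have hf : (fun t : ℝ => Real.log ‖1 + t * I‖) = fun t => Real.log (1 + t ^ 2) / 2 := by
    funext t
    rw [← ofReal_one, norm_add_mul_I, one_pow, Real.log_sqrt (by positivity)]
  have hderiv : deriv (fun t : ℝ => Real.log (1 + t ^ 2) / 2) = fun t => t / (1 + t ^ 2) := by
    funext t
    rw [((((hasDerivAt_pow 2 t).const_add 1).log (by positivity)).div_const 2).deriv]
    field_simp
    ring
  rw [hf]
  refine StrictMonoOn.strictConvexOn_of_deriv (convex_Icc _ _)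
    (Continuous.continuousOn (by fun_prop (disch := intro t; positivity))) ?_
  rw [hderiv, interior_Icc]
  intro a ha b hb hab
  simp only [Set.mem_Ioo] at ha hb
  rw [div_lt_div_iff₀ (by positivity) (by positivity)]
  nlinarith [mul_pos (sub_pos.2 hab) (show 0 < 1 - a * b by nlinarith)]

lemma norm_one_add_average_mul_I_lt {m : ℕ} (t : Fin m → ℝ) (ht : ∀ i, |t i| ≤ 1)
    (hne : ∃ i i', t i ≠ t i') :
    ‖1 + ((∑ i, t i) / m : ℝ) * I‖ < ∏ i, ‖1 + t i * I‖ ^ ((1 : ℝ) / m) := by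
  obtain ⟨a, b, hab⟩ := hne
  have hm : (0 : ℝ) < m := Nat.cast_pos.2 (Fin.pos a)
  have hpos : ∀ x : ℝ, 0 < ‖1 + x * I‖ := fun x =>
    zero_lt_one.trans_le (one_le_norm_one_add_mul_I x)
  have key := strictConvexOn_log_norm_one_add_mul_I.map_sum_lt (t := Finset.univ)
    (w := fun _ => 1 / (m : ℝ)) (p := t) (fun _ _ => by positivity)
    (by simp [Finset.card_univ]; field_simp) (fun i _ => abs_le.1 (ht i))
    ⟨a, Finset.mem_univ _, b, Finset.mem_univ _, hab⟩
  simp only [smul_eq_mul] at key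
  rw [← Real.exp_lt_exp, Real.exp_log (hpos _), Real.exp_sum] at key
  convert key using 4
  · rw [← Finset.mul_sum, div_eq_inv_mul, one_div]
  · rw [Real.rpow_def_of_pos (hpos _), mul_comm]

lemma norm_sum_mul_one_add_mul_I_lt {m : ℕ} {η δ : ℝ} (hηδ : m * η < 2 - δ)
    (u : Fin m → ℂ) (hu : ∀ i, ‖u i‖ = 1) {a b : Fin m} (hab : a ≠ b) (hδ : ‖u a + u b‖ ≤ δ)
    (t : Fin m → ℝ) (ht : ∀ i, |t i| ≤ η) :
    ‖∑ i, u i * (1 + t i * I)‖ < m := by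
  have hsum : ∑ i, u i * (1 + t i * I) = ∑ i, u i + ∑ i, u i * (t i * I) := by
    simp only [mul_add, mul_one, Finset.sum_add_distrib]
  have hu_sum : ‖∑ i, u i‖ ≤ δ + (m - 2) := by
    simpa using (norm_sum_le_norm_add_add_card_sub_two (fun i => (hu i).le) hab).trans
      (add_le_add_left hδ _)
  have ht_sum : ‖∑ i, u i * (t i * I)‖ ≤ m * η :=
    norm_sum_fin_le_mul _ fun i => by simpa [hu i] using ht i
  calc ‖∑ i, u i * (1 + t i * I)‖ ≤ ‖∑ i, u i‖ + ‖∑ i, u i * (t i * I)‖ := by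
        rw [hsum]; exact norm_add_le _ _
    _ ≤ δ + (m - 2) + m * η := add_le_add hu_sum ht_sum
    _ < m := by linarith

lemma norm_sum_div_lt_prod_rpow {m : ℕ} {η δ : ℝ} (hη : η ≤ 1) (hηδ : m * η < 2 - δ)
    (u : Fin m → ℂ) (hu : ∀ i, ‖u i‖ = 1) (hδ : ∀ i i', u i ≠ u i' → ‖u i + u i'‖ ≤ δ)
    (t : Fin m → ℝ) (ht : ∀ i, |t i| ≤ η)
    (hne : ∃ i i', u i * (1 + t i * I) ≠ u i' * (1 + t i' * I)) :
    ‖(∑ i, u i * (1 + t i * I)) / m‖ < ∏ i, ‖u i * (1 + t i * I)‖ ^ ((1 : ℝ) / m) := by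
  obtain ⟨a, b, hab⟩ := hne
  have hm : (0 : ℝ) < m := Nat.cast_pos.2 (Fin.pos a)
  simp only [norm_mul, hu, one_mul]
  by_cases hdir : ∀ i, u i = u a
  · have hsum : (∑ i, u i * (1 + t i * I)) / m = u a * (1 + ((∑ i, t i) / m : ℝ) * I) := by
      simp only [hdir, ← Finset.mul_sum, Finset.sum_add_distrib, ← Finset.sum_mul,
        Finset.sum_const, Finset.card_univ, Fintype.card_fin, nsmul_one]
      have hmC : (m : ℂ) ≠ 0 := Nat.cast_ne_zero.2 (Fin.pos a).ne'
      push_cast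
      field_simp
    rw [hsum, norm_mul, hu, one_mul]
    refine norm_one_add_average_mul_I_lt t (fun i => (ht i).trans hη) ⟨a, b, fun h => hab ?_⟩
    rw [hdir b, h]
  · obtain ⟨c, hc⟩ := not_forall.1 hdir
    calc ‖(∑ i, u i * (1 + t i * I)) / m‖ < 1 := by
          rw [norm_div, Complex.norm_natCast, div_lt_one hm]
          exact norm_sum_mul_one_add_mul_I_lt hηδ u hu (fun h => hc (congrArg u h)) (hδ c a hc)
            t ht
      _ ≤ _ := Finset.one_le_prod fun i _ =>
          Real.one_le_rpow (one_le_norm_one_add_mul_I _) (by positivity)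

section Bset

variable {n : ℕ} {x₀ η ε : ℝ} {w : ℂ}

lemma exists_pow_eq_one_of_mem_Bset (hw : w ∈ Bset n x₀ η ε) :
    ∃ u : ℂ, u ^ (n + 1) = 1 ∧ ∃ t : ℝ, |t| ≤ η ∧
      w = (x₀ * (1 + ε) : ℝ) * (u * (1 + t * I)) := by
  obtain ⟨j, -, t, ht, rfl⟩ := hw
  refine ⟨_, ?_, t, ht, mul_assoc _ _ _⟩
  rw [← exp_nat_mul]
  convert exp_nat_mul_two_pi_mul_I j using 2
  push_cast
  field_simp

lemma le_norm_of_mem_Bset (hR : 0 ≤ x₀ * (1 + ε)) (hw : w ∈ Bset n x₀ η ε) :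
    x₀ * (1 + ε) ≤ ‖w‖ := by
  obtain ⟨u, hu, t, -, rfl⟩ := exists_pow_eq_one_of_mem_Bset hw
  rw [norm_mul, norm_mul, norm_real, Real.norm_of_nonneg hR,
    norm_eq_one_of_pow_eq_one hu n.succ_ne_zero, one_mul]
  exact le_mul_of_one_le_right hR (one_le_norm_one_add_mul_I t)

lemma norm_le_of_mem_Bset (hR : 0 ≤ x₀ * (1 + ε)) (hw : w ∈ Bset n x₀ η ε) :
    ‖w‖ ≤ x₀ * (1 + ε) * (1 + η) := by
  obtain ⟨u, hu, t, ht, rfl⟩ := exists_pow_eq_one_of_mem_Bset hw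
  rw [norm_mul, norm_mul, norm_real, Real.norm_of_nonneg hR,
    norm_eq_one_of_pow_eq_one hu n.succ_ne_zero, one_mul]
  exact mul_le_mul_of_nonneg_left ((norm_one_add_mul_I_le t).trans (by linarith)) hR

lemma one_le_norm_div_of_mem_Bset (hx₀ : 0 < x₀) (hε : 0 ≤ ε) (hw : w ∈ Bset n x₀ η ε) :
    1 ≤ ‖w / x₀‖ := by
  rw [norm_div, norm_real, Real.norm_of_nonneg hx₀.le, one_le_div hx₀]
  exact (le_mul_of_one_le_right hx₀.le (by linarith)).trans
    (le_norm_of_mem_Bset (by positivity) hw)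

lemma norm_sum_div_le_of_mem_Bset {d m : ℕ} (hdm : d < m) (hR : 0 ≤ x₀ * (1 + ε))
    (hη : 0 ≤ η) (ξ : Fin d → ℂ) (hξ : ∀ i, ξ i ∈ Bset n x₀ η ε) :
    ‖(∑ i, ξ i) / m‖ ≤ (m - 1) / m * (x₀ * (1 + ε) * (1 + η)) := by
  have hd : (d : ℝ) ≤ m - 1 := by
    have : (d : ℝ) + 1 ≤ m := by exact_mod_cast hdm
    linarith
  rw [norm_div, Complex.norm_natCast, div_mul_eq_mul_div]
  gcongr
  exact (norm_sum_fin_le_mul ξ fun i => norm_le_of_mem_Bset hR (hξ i)).trans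
    (mul_le_mul_of_nonneg_right hd (mul_nonneg hR (by linarith)))

lemma norm_sum_div_div_lt_prod_of_mem_Bset {m : ℕ} {δ : ℝ} (hx₀ : 0 < x₀) (hε : -1 < ε)
    (hη : η ≤ 1) (hηδ : m * η < 2 - δ)
    (hδ : ∀ u v : ℂ, u ^ (n + 1) = 1 → v ^ (n + 1) = 1 → u ≠ v → ‖u + v‖ ≤ δ)
    (ξ : Fin m → ℂ) (hξ : ∀ i, ξ i ∈ Bset n x₀ η ε) (hne : ∃ i i', ξ i ≠ ξ i') :
    ‖(∑ i, ξ i) / m / x₀‖ < ∏ i, ‖ξ i / x₀‖ ^ ((1 : ℝ) / m) := by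
  choose u hu t ht hξu using fun i => exists_pow_eq_one_of_mem_Bset (hξ i)
  have hm : m ≠ 0 := (Fin.pos hne.choose).ne'
  have hc : 0 < 1 + ε := by linarith
  have hdiv : ∀ i, ξ i / x₀ = ((1 + ε : ℝ) : ℂ) * (u i * (1 + t i * I)) := by
    intro i
    rw [hξu i, ofReal_mul, mul_assoc, mul_div_right_comm,
      div_self (ofReal_ne_zero.2 hx₀.ne'), one_mul]
  have hsum : (∑ i, ξ i) / m / x₀ = ((1 + ε : ℝ) : ℂ) * ((∑ i, u i * (1 + t i * I)) / m) := by
    rw [div_right_comm, Finset.sum_div, Finset.sum_congr rfl fun i _ => hdiv i, ← Finset.mul_sum,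
      mul_div_assoc]
  have hprod : ∏ i, ‖ξ i / x₀‖ ^ ((1 : ℝ) / m) =
      (1 + ε) * ∏ i, ‖u i * (1 + t i * I)‖ ^ ((1 : ℝ) / m) := by
    simp_rw [hdiv, norm_mul (ofReal _), norm_real, Real.norm_of_nonneg hc.le,
      Real.mul_rpow hc.le (norm_nonneg _)]
    rw [Finset.prod_mul_distrib, Finset.prod_const, Finset.card_univ, Fintype.card_fin, one_div,
      Real.rpow_inv_natCast_pow hc.le hm]
  rw [hsum, hprod, norm_mul, norm_real, Real.norm_of_nonneg hc.le]
  refine mul_lt_mul_of_pos_left (norm_sum_div_lt_prod_rpow hη hηδ u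
    (fun i => norm_eq_one_of_pow_eq_one (hu i) n.succ_ne_zero)
    (fun i i' => hδ _ _ (hu i) (hu i')) t ht ?_) hc
  obtain ⟨i, i', h⟩ := hne
  exact ⟨i, i', fun h' => h (by rw [hξu i, hξu i', h'])⟩

end Bset

lemma norm_div_ofReal_pow_lt_one {w : ℂ} {x₀ : ℝ} (hx₀ : 0 < x₀) (hw : ‖w‖ < x₀) (k : ℕ) :
    ‖(w / x₀) ^ (k + 1)‖ < 1 := by
  rw [norm_pow, norm_div, norm_real, Real.norm_of_nonneg hx₀.le]
  exact pow_lt_one₀ (by positivity) ((div_lt_one hx₀).2 hw) k.succ_ne_zero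

lemma exists_pos_le_one_mul_lt {m : ℕ} {x₀ δ : ℝ} (hx₀ : 0 < x₀) (hδ : δ < 2) :
    ∃ η > (0 : ℝ), η ≤ 1 ∧ m * η < 2 - δ ∧
      m * η + (m - 1) / m * (x₀ * (1 + η) * (1 + η)) < x₀ := by
  have hm : ((m : ℝ) - 1) / m < 1 := by
    rcases m.eq_zero_or_pos with rfl | hm
    · simp
    · rw [div_lt_one (by exact_mod_cast hm)]; linarith
  have h1 : ∀ᶠ η in 𝓝 (0 : ℝ), m * η < 2 - δ :=
    ContinuousAt.eventually_lt (by fun_prop) continuousAt_const (by simpa using sub_pos.2 hδ)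
  have h2 : ∀ᶠ η in 𝓝 (0 : ℝ), m * η + (m - 1) / m * (x₀ * (1 + η) * (1 + η)) < x₀ :=
    ContinuousAt.eventually_lt (by fun_prop) continuousAt_const
      (by simpa using mul_lt_of_lt_one_left hx₀ hm)
  obtain ⟨η, ⟨h1, h2, h3⟩, hη⟩ := ((h1.and (h2.and (eventually_le_nhds one_pos))).filter_mono
    nhdsWithin_le_nhds |>.and (self_mem_nhdsWithin (s := Set.Ioi 0))).exists
  exact ⟨η, hη, h3, h1, h2⟩

theorem stmt15_general (n m : ℕ) (x₀ : ℝ) (hx₀ : 0 < x₀) :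
    ∃ η > (0 : ℝ), ∃ ε > (0 : ℝ),
      (∀ j : ℕ, 1 ≤ j → j ≤ m → ∀ d : ℕ, d ≤ j → d ≠ m →
        ∀ ξ' : Fin (j - d) → ℂ, (∀ i, ξ' i ∈ Metric.ball (0 : ℂ) η) →
          ∀ ξ : Fin d → ℂ, (∀ i, ξ i ∈ Bset n x₀ η ε) →
            ‖((∑ i, ξ' i + (∑ i, ξ i) / m) / (x₀ : ℂ)) ^ (n + 1)‖ < 1) ∧
      (∀ l : ℕ, 1 ≤ l → l ≤ m → ∀ ξ : Fin l → ℂ, (∀ i, ξ i ∈ Bset n x₀ η ε) →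
        (∃ i i', ξ i ≠ ξ i') →
          ‖((∑ i, ξ i) / m / (x₀ : ℂ)) ^ (n + 1)‖ <
            ∏ i, ‖(ξ i / (x₀ : ℂ)) ^ (n + 1)‖ ^ ((1 : ℝ) / m)) := by
  obtain ⟨δ, hδ2, hδ⟩ := exists_lt_two_norm_add_le_of_pow_eq_one n
  obtain ⟨η, hη, hη1, hηδ, hsmall⟩ := exists_pos_le_one_mul_lt (m := m) hx₀ hδ2
  have hR : 0 ≤ x₀ * (1 + η) := by positivity
  refine ⟨η, hη, η, hη, ?_, ?_⟩
  · intro j _ hjm d hdj hdm ξ' hξ' ξ hξ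
    refine norm_div_ofReal_pow_lt_one hx₀ ?_ n
    calc ‖∑ i, ξ' i + (∑ i, ξ i) / m‖ ≤ ‖∑ i, ξ' i‖ + ‖(∑ i, ξ i) / m‖ := norm_add_le _ _
      _ ≤ m * η + (m - 1) / m * (x₀ * (1 + η) * (1 + η)) := by
        gcongr ?_ + ?_
        · refine (norm_sum_fin_le_mul ξ' fun i => (mem_ball_zero_iff.1 (hξ' i)).le).trans ?_
          gcongr
          omega
        · exact norm_sum_div_le_of_mem_Bset (by omega) hR hη.le ξ hξ
      _ < x₀ := hsmall
  · intro l _ hlm ξ hξ hne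
    rcases hlm.lt_or_eq with hlt | rfl
    · have hξ1 : ∀ i, 1 ≤ ‖(ξ i / x₀) ^ (n + 1)‖ := fun i => by
        rw [norm_pow]
        exact one_le_pow₀ (one_le_norm_div_of_mem_Bset hx₀ hη.le (hξ i))
      calc ‖((∑ i, ξ i) / m / x₀) ^ (n + 1)‖ < 1 := by
            refine norm_div_ofReal_pow_lt_one hx₀
              ((norm_sum_div_le_of_mem_Bset hlt hR hη.le ξ hξ).trans_lt ?_) n
            linarith [mul_nonneg (Nat.cast_nonneg (α := ℝ) m) hη.le]
        _ ≤ _ := Finset.one_le_prod fun i _ => Real.one_le_rpow (hξ1 i) (by positivity)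
    · simp_rw [norm_pow, ← Real.rpow_pow_comm (norm_nonneg _), Finset.prod_pow]
      exact pow_lt_pow_left₀ (norm_sum_div_div_lt_prod_of_mem_Bset hx₀ (by linarith) hη1 hηδ hδ
        ξ hξ hne) (norm_nonneg _) n.succ_ne_zero

theorem stmt15 (n m : ℕ) (hm : 1 ≤ m) (x₀ : ℝ) (hx₀ : 0 < x₀) :
    ∃ η > (0 : ℝ), ∃ ε > (0 : ℝ),
      (∀ j : ℕ, 1 ≤ j → j ≤ m → ∀ d : ℕ, d ≤ j → d ≠ m →
        ∀ ξ' : Fin (j - d) → ℂ, (∀ i, ξ' i ∈ Metric.ball (0 : ℂ) η) →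
          ∀ ξ : Fin d → ℂ, (∀ i, ξ i ∈ Bset n x₀ η ε) →
            ‖((∑ i, ξ' i + (∑ i, ξ i) / m) / (x₀ : ℂ)) ^ (n + 1)‖ < 1) ∧
      (∀ l : ℕ, 1 ≤ l → l ≤ m → ∀ ξ : Fin l → ℂ, (∀ i, ξ i ∈ Bset n x₀ η ε) →
        (∃ i i', ξ i ≠ ξ i') →
          ‖((∑ i, ξ i) / m / (x₀ : ℂ)) ^ (n + 1)‖ <
            ∏ i, ‖(ξ i / (x₀ : ℂ)) ^ (n + 1)‖ ^ ((1 : ℝ) / m)) :=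
  stmt15_general n m x₀ hx₀

end
end
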